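/- arXiv:2510.01374 — 2 statements merged into one kernel-verified Lean document; each statement's English description precedes it below -/
import Mathlib

section
/- Let 1 < p < ∞ and 1/p + 1/q = 1. Then ‖sinc_1‖_{L^q(ℝ)} · ‖sinc_{1/8}‖_{L^p(ℝ)} ≤ c·(p + 1/(p−1)) for a universal constant c > 0 (one may take c = 4/π). -/
/-!
Both factors are controlled by one pointwise bound, `|sinc_a x| ≤ max(4a, 1) / (1 + |x|)`: near the
origin `|sinc_a| ≤ 2a` and `1 + |x| ≤ 2`, away from it `|sinc_a x| ≤ 1 / (π|x|) ≤ 1 / (1 + |x|)`.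
Since `∫ (1 + |x|)^(-r) = 2 / (r - 1)`, this gives `‖sinc_a‖_r ≤ max(4a, 1) (2s - 1)` for the
exponent `s` conjugate to `r`, using `x^(1/r) ≤ 1 + x` and `1 / (r - 1) = s - 1`. The product is then
at most `4 (2p - 1)(2q - 1) = 8 (p + q) + 4`, because `pq = p + q`, and this is `≤ 12 (p + q - 1)`
as `p + q ≥ 4`.
-/

open MeasureTheory Real

noncomputable def sinc (a : ℝ) (x : ℝ) : ℝ :=
  if x = 0 then 2 * a else Real.sin (2 * π * a * x) / (π * x)

open Set

lemma sinc_eq_mul_sinc (a x : ℝ) : sinc a x = 2 * a * Real.sinc (2 * π * a * x) := by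
  rcases eq_or_ne x 0 with rfl | hx
  · simp [_root_.sinc]
  rcases eq_or_ne a 0 with rfl | ha
  · simp [_root_.sinc]
  rw [_root_.sinc, if_neg hx, Real.sinc_of_ne_zero (by positivity)]
  field_simp

lemma abs_sinc_le (a x : ℝ) : |sinc a x| ≤ 2 * |a| := by
  rw [sinc_eq_mul_sinc, abs_mul, abs_mul, abs_two]
  exact mul_le_of_le_one_right (by positivity) (Real.abs_sinc_le_one _)

lemma abs_sinc_le_inv_pi_mul (a : ℝ) {x : ℝ} (hx : x ≠ 0) : |sinc a x| ≤ (π * |x|)⁻¹ := by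
  rw [_root_.sinc, if_neg hx, abs_div, abs_mul, abs_of_pos pi_pos, div_eq_mul_inv]
  exact mul_le_of_le_one_left (by positivity) (abs_sin_le_one _)

lemma abs_sinc_le_max_mul_inv_one_add_abs {a : ℝ} (ha : 0 ≤ a) (x : ℝ) :
    |sinc a x| ≤ max (4 * a) 1 * (1 + |x|)⁻¹ := by
  rw [← div_eq_mul_inv, le_div_iff₀ (by positivity)]
  rcases le_or_gt |x| 1 with hx | hx
  · calc |sinc a x| * (1 + |x|) ≤ 2 * a * 2 := by
          gcongr
          · simpa [abs_of_nonneg ha] using abs_sinc_le a x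
          · linarith
      _ ≤ max (4 * a) 1 := by linarith [le_max_left (4 * a) 1]
  · have hx0 : x ≠ 0 := by rintro rfl; simp at hx; linarith
    calc |sinc a x| * (1 + |x|) ≤ (π * |x|)⁻¹ * (π * |x|) := by
          gcongr
          · exact abs_sinc_le_inv_pi_mul a hx0
          · nlinarith [pi_gt_three]
      _ = 1 := inv_mul_cancel₀ (by positivity)
      _ ≤ max (4 * a) 1 := le_max_right _ _

lemma integral_Ioi_one_add_rpow_neg {r : ℝ} (hr : 1 < r) :
    ∫ x in Ioi (0 : ℝ), (1 + x) ^ (-r) = 1 / (r - 1) := by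
  have := (measurePreserving_add_left volume (1 : ℝ)).setIntegral_preimage_emb
    (measurableEmbedding_addLeft 1) (fun x => x ^ (-r)) (Ioi 1)
  simp only [preimage_const_add_Ioi, sub_self] at this
  rw [this, integral_Ioi_rpow_of_lt (by linarith) one_pos, one_rpow, show -r + 1 = -(r - 1) by ring,
    neg_div_neg_eq]

lemma integral_one_add_abs_rpow_neg {r : ℝ} (hr : 1 < r) :
    ∫ x, (1 + |x|) ^ (-r) = 2 / (r - 1) := by
  rw [integral_comp_abs (f := fun x => (1 + x) ^ (-r)), integral_Ioi_one_add_rpow_neg hr]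
  ring

lemma eLpNorm_inv_one_add_abs {r : ℝ} (hr : 1 < r) :
    eLpNorm (fun x : ℝ => (1 + |x|)⁻¹) (ENNReal.ofReal r) volume =
      ENNReal.ofReal ((2 / (r - 1)) ^ (1 / r)) := by
  have hr0 : 0 < r := by linarith
  have hnorm : ∀ x : ℝ, ‖(1 + |x|)⁻¹‖ ^ r = (1 + |x|) ^ (-r) := fun x => by
    rw [norm_inv, Real.norm_of_nonneg (by positivity), rpow_neg (by positivity),
      inv_rpow (by positivity)]
  have hmem : MemLp (fun x : ℝ => (1 + |x|)⁻¹) (ENNReal.ofReal r) volume := by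
    refine (integrable_norm_rpow_iff (by fun_prop) (by simpa using hr0) ENNReal.ofReal_ne_top).mp ?_
    simp only [ENNReal.toReal_ofReal hr0.le, hnorm]
    exact integrable_one_add_norm (by simpa using hr)
  rw [hmem.eLpNorm_eq_integral_rpow_norm (by simpa using hr0) ENNReal.ofReal_ne_top,
    ENNReal.toReal_ofReal hr0.le]
  simp only [hnorm, integral_one_add_abs_rpow_neg hr, one_div]

lemma toReal_eLpNorm_sinc_le {a r : ℝ} (ha : 0 ≤ a) (hr : 1 < r) :
    (eLpNorm (sinc a) (ENNReal.ofReal r) volume).toReal ≤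
      max (4 * a) 1 * (2 / (r - 1)) ^ (1 / r) := by
  have h := eLpNorm_le_mul_eLpNorm_of_ae_le_mul (μ := volume) (f := sinc a)
    (g := fun x : ℝ => (1 + |x|)⁻¹)
    (ae_of_all _ fun x => by
      simpa [Real.norm_eq_abs, abs_of_pos (by positivity : 0 < 1 + |x|)]
        using abs_sinc_le_max_mul_inv_one_add_abs ha x) (ENNReal.ofReal r)
  rw [eLpNorm_inv_one_add_abs hr, ← ENNReal.ofReal_mul (by positivity)] at h
  exact ENNReal.toReal_le_of_le_ofReal (by positivity) h

lemma rpow_le_one_add {x s : ℝ} (hx : 0 ≤ x) (hs₀ : 0 ≤ s) (hs₁ : s ≤ 1) : x ^ s ≤ 1 + x := by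
  rcases le_total x 1 with h | h
  · linarith [rpow_le_one hx h hs₀]
  · linarith [rpow_le_self_of_one_le h hs₁]

lemma toReal_eLpNorm_sinc_le_of_holderConjugate {a r s : ℝ} (ha : 0 ≤ a)
    (hrs : r.HolderConjugate s) :
    (eLpNorm (sinc a) (ENNReal.ofReal r) volume).toReal ≤ max (4 * a) 1 * (2 * s - 1) := by
  have hsub : 2 / (r - 1) = 2 * (s - 1) := by
    rw [div_eq_iff hrs.sub_one_ne_zero]
    linear_combination -2 * hrs.sub_one_mul_conj
  refine (toReal_eLpNorm_sinc_le ha hrs.lt).trans ?_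
  gcongr
  calc (2 / (r - 1)) ^ (1 / r) ≤ 1 + 2 / (r - 1) :=
        rpow_le_one_add (div_nonneg zero_le_two hrs.sub_one_pos.le) hrs.one_div_nonneg
          ((div_le_one hrs.pos).mpr hrs.lt.le)
    _ = 2 * s - 1 := by rw [hsub]; ring

/-- For conjugate exponents `1 < p, q < ∞`,
`‖sinc_1‖_{L^q} · ‖sinc_{1/8}‖_{L^p} ≤ c·(p + 1/(p−1))` for a universal constant `c > 0`. -/
theorem sinc_norm_product_bound :
    ∃ c : ℝ, 0 < c ∧ ∀ p q : ℝ, 1 < p → 1 / p + 1 / q = 1 →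
      (eLpNorm (sinc 1) (ENNReal.ofReal q) volume).toReal *
          (eLpNorm (sinc (1 / 8)) (ENNReal.ofReal p) volume).toReal ≤
        c * (p + 1 / (p - 1)) := by
  refine ⟨12, by norm_num, fun p q hp hpq => ?_⟩
  have hconj : p.HolderConjugate q := holderConjugate_iff.mpr ⟨hp, by simpa using hpq⟩
  have hsinc_one : (eLpNorm (sinc 1) (ENNReal.ofReal q) volume).toReal ≤ 4 * (2 * p - 1) :=
    (toReal_eLpNorm_sinc_le_of_holderConjugate zero_le_one hconj.symm).trans_eq (by norm_num)
  have hsinc_eighth : (eLpNorm (sinc (1 / 8)) (ENNReal.ofReal p) volume).toReal ≤ 2 * q - 1 :=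
    (toReal_eLpNorm_sinc_le_of_holderConjugate (by norm_num) hconj).trans_eq (by norm_num)
  have hprod : (p - 1) * (q - 1) = 1 := by linear_combination hconj.sub_one_mul_conj
  have hsum : 4 ≤ p + q := by nlinarith [sq_nonneg (p - q), hconj.lt, hconj.symm.lt]
  calc _ ≤ 4 * (2 * p - 1) * (2 * q - 1) :=
        mul_le_mul hsinc_one hsinc_eighth ENNReal.toReal_nonneg (by linarith [hconj.symm.lt])
    _ ≤ 12 * (p + (q - 1)) := by linarith [hconj.mul_eq_add]
    _ = 12 * (p + 1 / (p - 1)) := by rw [← eq_one_div_of_mul_eq_one_right hprod]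
end

section
/- Let 1 < p < ∞, a > 0, and let φ be a Schwartz function with supp(φ̂) ⊂ ℝ_+. Then the Hankel operator H_{θ̄_a²φ} : H^p_+ → H^p_− satisfies H_{θ̄_a²φ} = θ̄_a T_φ θ_a P_− θ̄_a², where T_φ is the Toeplitz operator on PW_a^p and θ_a(x) = e^{2πiax}. -/
/-!
On the Fourier side, multiplication by `θ_c` is translation by `c`, and multiplication by `φ` is
convolution with `φ̂`, which is supported in `[0, ∞)`. Both sides are then inverse transforms of
truncations of `ξ ↦ (ĝ ⋆ φ̂)(ξ + 2a)`: the left side cuts it to `ξ < 0`; the right side cuts it to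
`-2a ≤ ξ ≤ 0` after first cutting `ĝ(· + 2a)` to `(-∞, 0)`. For `ξ < 0` the inner cut is invisible,
since `φ̂(ξ - s) = 0` for `s > ξ`, and for `ξ < -2a` the convolution vanishes because `ĝ` and `φ̂`
are both supported in `[0, ∞)`. So the two frequency functions agree off `ξ = 0`.
-/

open MeasureTheory Real SchwartzMap Set Convolution ContinuousLinearMap
open scoped FourierTransform

namespace Real

variable {E : Type*} [NormedAddCommGroup E] [NormedSpace ℂ E]

theorem exp_mul_I_eq_fourierChar {t : ℝ} {z : ℂ} (hz : z = 2 * π * t) :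
    Complex.exp (z * Complex.I) = 𝐞 t := by
  rw [fourierChar_apply, hz]
  push_cast
  rfl

theorem fourier_fourierChar_smul (f : ℝ → E) (c η : ℝ) :
    𝓕 (fun y ↦ 𝐞 (c * y) • f y) η = 𝓕 f (η - c) := by
  simp only [fourier_real_eq, smul_smul, ← AddChar.map_add_eq_mul]
  congr 1 with y
  ring_nf

theorem fourierInv_comp_add_right (f : ℝ → E) (c x : ℝ) :
    𝓕⁻ (fun ξ ↦ f (ξ + c)) x = 𝐞 (-(c * x)) • 𝓕⁻ f x := by
  convert congrFun (VectorFourier.fourierIntegral_comp_add_right 𝐞 volume (-innerₗ ℝ) f c) x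
    using 3
  · rfl
  · simp [mul_comm]
  · rfl

theorem fourier_mul_fourierInv {φ K : ℝ → ℂ} (hφ : Integrable φ) (hK : Integrable K) :
    𝓕 (fun y ↦ φ y * 𝓕⁻ K y) = K ⋆[mul ℂ ℂ] 𝓕 φ := by
  ext η
  have hflip := VectorFourier.integral_fourierIntegral_smul_eq_flip (μ := volume) (ν := volume)
    (L := -innerₗ ℝ) continuous_fourierChar (by fun_prop) hK
    ((fourierIntegral_convergent_iff η).2 hφ)
  have hmod (t : ℝ) : VectorFourier.fourierIntegral 𝐞 volume (-innerₗ ℝ).flip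
      (fun v ↦ 𝐞 (-inner ℝ v η) • φ v) t = 𝓕 φ (η - t) := by
    simp only [VectorFourier.fourierIntegral, fourier_eq, smul_smul, ← AddChar.map_add_eq_mul]
    congr 1 with v
    simp only [LinearMap.flip_apply, LinearMap.neg_apply, innerₗ_apply_apply, inner_sub_right,
      real_inner_comm t v]
    ring_nf
  calc 𝓕 (fun y ↦ φ y * 𝓕⁻ K y) η
      = ∫ y, 𝓕⁻ K y • 𝐞 (-inner ℝ y η) • φ y := by
        rw [fourier_eq]
        congr 1 with y
        simp only [Circle.smul_def, smul_eq_mul]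
        ring
    _ = ∫ t, K t * 𝓕 φ (η - t) := by
        refine hflip.trans ?_
        simp_rw [hmod, smul_eq_mul]
    _ = (K ⋆[mul ℂ ℂ] 𝓕 φ) η := convolution_mul.symm

end Real

section Convolution

variable {𝕜 E E' F : Type*} [NontriviallyNormedField 𝕜]
  [NormedAddCommGroup E] [NormedAddCommGroup E'] [NormedAddCommGroup F]
  [NormedSpace 𝕜 E] [NormedSpace 𝕜 E'] [NormedSpace 𝕜 F] [NormedSpace ℝ F]
  (L : E →L[𝕜] E' →L[𝕜] F)

namespace MeasureTheory

variable {f : ℝ → E} {g : ℝ → E'} {μ : Measure ℝ}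

theorem convolution_comp_add_right {G : Type*} [MeasurableSpace G] [AddGroup G] [MeasurableAdd G]
    {ν : Measure G} [ν.IsAddRightInvariant] (f : G → E) (g : G → E') (x b : G) :
    (f ⋆[L, ν] g) (x + b) = ((fun t ↦ f (t + b)) ⋆[L, ν] g) x := by
  simp only [convolution_def]
  rw [← integral_add_right_eq_self _ b]
  simp only [add_sub_add_right_eq_sub]

theorem convolution_eq_zero_of_neg (hf : ∀ t < 0, f t = 0) (hg : ∀ t < 0, g t = 0)
    {x : ℝ} (hx : x < 0) : (f ⋆[L, μ] g) x = 0 := by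
  rw [convolution_def]
  refine integral_eq_zero_of_ae (Filter.Eventually.of_forall fun t ↦ ?_)
  rcases lt_or_ge t 0 with ht | ht
  · simp [hf t ht]
  · simp [hg (x - t) (by linarith)]

theorem indicator_Iio_convolution_eq (hg : ∀ t < 0, g t = 0) {c x : ℝ} (hx : x < c) :
    ((Iio c).indicator f ⋆[L, μ] g) x = (f ⋆[L, μ] g) x := by
  simp only [convolution_def]
  congr 1 with t
  by_cases ht : t ∈ Iio c
  · rw [indicator_of_mem ht]
  · rw [indicator_of_notMem ht, hg (x - t) (by rw [mem_Iio, not_lt] at ht; linarith)]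
    simp

end MeasureTheory

theorem indicator_Iio_convolution_ae_eq {G : ℝ → E} {Φ : ℝ → E'}
    (hG : ∀ t < 0, G t = 0) (hΦ : ∀ t < 0, Φ t = 0) (a : ℝ) :
    (Iio 0).indicator (fun ξ ↦ (G ⋆[L] Φ) (ξ + 2 * a)) =ᵐ[volume]
      fun ξ ↦ (Icc (-a) a).indicator
        (fun η ↦ ((Iio 0).indicator (fun s ↦ G (s + 2 * a)) ⋆[L] Φ) (η - a)) (ξ + a) := by
  filter_upwards [volume.ae_ne 0] with ξ hξ
  rcases hξ.lt_or_gt with hneg | hpos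
  · rw [indicator_of_mem (mem_Iio.2 hneg)]
    by_cases hlow : -(2 * a) ≤ ξ
    · rw [indicator_of_mem (mem_Icc.2 ⟨by linarith, by linarith⟩),
        add_sub_cancel_right, indicator_Iio_convolution_eq L hΦ hneg,
        convolution_comp_add_right]
    · rw [indicator_of_notMem fun h : ξ + a ∈ Icc (-a) a ↦ by linarith [h.1],
        convolution_eq_zero_of_neg L hG hΦ (by linarith)]
  · rw [indicator_of_notMem (notMem_Iio.2 hpos.le),
      indicator_of_notMem fun h : ξ + a ∈ Icc (-a) a ↦ by linarith [h.2]]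

end Convolution

theorem hankel_eq_toeplitz_general (a : ℝ) (φ g : 𝓢(ℝ, ℂ))
    (hφ : ∀ ξ : ℝ, ξ < 0 → 𝓕 ⇑φ ξ = 0)
    (hg : ∀ ξ : ℝ, ξ < 0 → 𝓕 ⇑g ξ = 0) :
    ∀ x : ℝ,
      𝓕⁻ (Set.indicator (Set.Iio 0)
          (𝓕 fun y : ℝ => Complex.exp (-(2 * π * (2 * a) * y) * Complex.I) * φ y * g y)) x =
        Complex.exp (-(2 * π * a * x) * Complex.I) *
          𝓕⁻ (Set.indicator (Set.Icc (-a) a)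
            (𝓕 fun y : ℝ => φ y *
              (Complex.exp ((2 * π * a * y) * Complex.I) *
                𝓕⁻ (Set.indicator (Set.Iio 0) (fun ξ : ℝ => 𝓕 ⇑g (ξ + 2 * a))) y))) x := by
  intro x
  set K := (Iio 0).indicator fun ξ : ℝ ↦ 𝓕 ⇑g (ξ + 2 * a)
  have hK : Integrable K := ((𝓕 g).integrable.comp_add_right (2 * a)).indicator measurableSet_Iio
  have hLHS : (𝓕 fun y : ℝ ↦ Complex.exp (-(2 * π * (2 * a) * y) * Complex.I) * φ y * g y) =
      fun ξ ↦ (𝓕 ⇑g ⋆[mul ℂ ℂ] 𝓕 ⇑φ) (ξ + 2 * a) := by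
    have hmod : (fun y : ℝ ↦ Complex.exp (-(2 * π * (2 * a) * y) * Complex.I) * φ y * g y) =
        fun y ↦ 𝐞 (-(2 * a) * y) • (φ y * 𝓕⁻ (𝓕 ⇑g) y) := by
      ext y
      rw [g.continuous.fourierInv_fourier_eq g.integrable (𝓕 g).integrable, Circle.smul_def,
        smul_eq_mul, exp_mul_I_eq_fourierChar (t := -(2 * a) * y) (by push_cast; ring)]
      ring
    ext ξ
    rw [hmod, fourier_fourierChar_smul, fourier_mul_fourierInv φ.integrable (𝓕 g).integrable,
      sub_neg_eq_add]
  have hRHS : (𝓕 fun y : ℝ ↦ φ y * (Complex.exp ((2 * π * a * y) * Complex.I) * 𝓕⁻ K y)) =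
      fun η ↦ (K ⋆[mul ℂ ℂ] 𝓕 ⇑φ) (η - a) := by
    have hmod : (fun y : ℝ ↦ φ y * (Complex.exp ((2 * π * a * y) * Complex.I) * 𝓕⁻ K y)) =
        fun y ↦ 𝐞 (a * y) • (φ y * 𝓕⁻ K y) := by
      ext y
      rw [Circle.smul_def, smul_eq_mul, exp_mul_I_eq_fourierChar (t := a * y) (by push_cast; ring)]
      ring
    ext η
    rw [hmod, fourier_fourierChar_smul, fourier_mul_fourierInv φ.integrable hK]
  calc _ = 𝓕⁻ (fun ξ ↦ (Icc (-a) a).indicator (fun η ↦ (K ⋆[mul ℂ ℂ] 𝓕 ⇑φ) (η - a)) (ξ + a)) x := by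
        rw [hLHS, fourierInv_eq_fourier_neg, fourierInv_eq_fourier_neg]
        exact fourier_congr_ae (indicator_Iio_convolution_ae_eq _ hg hφ a) _
    _ = _ := by
        rw [fourierInv_comp_add_right, Circle.smul_def, smul_eq_mul, hRHS,
          exp_mul_I_eq_fourierChar (t := -(a * x)) (by push_cast; ring)]

/-- For `1 < p < ∞`, `a > 0`, and Schwartz `φ` with `supp φ̂ ⊂ ℝ₊`, the Hankel operator
`H_{θ̄_a²φ} : H^p₊ → H^p₋` coincides with `θ̄_a T_φ θ_a P₋ θ̄_a²` (where `T_φ` is the Toeplitz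
operator on `PW_a^p`), evaluated here pointwise on Schwartz functions `g ∈ H^p₊`:
`P₋[θ̄_a²φg] = θ̄_a · P_a[φ · θ_a P₋[θ̄_a² g]]` with `P₋, P_a` given as Fourier multipliers. -/
theorem hankel_eq_toeplitz (a p : ℝ) (ha : 0 < a) (hp : 1 < p) (φ g : 𝓢(ℝ, ℂ))
    (hφ : ∀ ξ : ℝ, ξ < 0 → 𝓕 ⇑φ ξ = 0)
    (hg : ∀ ξ : ℝ, ξ < 0 → 𝓕 ⇑g ξ = 0) :
    ∀ x : ℝ,
      𝓕⁻ (Set.indicator (Set.Iio 0)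
          (𝓕 fun y : ℝ => Complex.exp (-(2 * π * (2 * a) * y) * Complex.I) * φ y * g y)) x =
        Complex.exp (-(2 * π * a * x) * Complex.I) *
          𝓕⁻ (Set.indicator (Set.Icc (-a) a)
            (𝓕 fun y : ℝ => φ y *
              (Complex.exp ((2 * π * a * y) * Complex.I) *
                𝓕⁻ (Set.indicator (Set.Iio 0) (fun ξ : ℝ => 𝓕 ⇑g (ξ + 2 * a))) y))) x :=
  hankel_eq_toeplitz_general a φ g hφ hg
end
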